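/- arXiv:math/0610913 — 5 statements merged into one kernel-verified Lean document; each statement's English description precedes it below -/
import Mathlib

section
/- For every odd integer p ≥ 9 there exists a Laurent polynomial Q_p(q,t) ∈ ℤ[q^{±1}, t^{±1}] with nonnegative coefficients such that Kh_p(q,t) = q·(1 + q²) + (1 + t q⁴) · Q_p(q,t). -/
open Finset

/-- Laurent polynomials in two variables `t, q` over `ℤ`:
the index `(i, j)` records the monomial `t^i q^j`. -/
abbrev LP := AddMonoidAlgebra ℤ (ℤ × ℤ)

/-- The monomial `c · t^i q^j`. -/
noncomputable def mono (i j c : ℤ) : LP := AddMonoidAlgebra.single (i, j) c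

/-- The Khovanov Poincaré polynomial `Kh_p(q,t)` of `P(p, -(p-2), 0)` (formula (000)). -/
noncomputable def Kh (p : ℤ) : LP :=
  mono (2 - p) (5 - 2*p) 1 + mono (3 - p) (9 - 2*p) 1 + mono (4 - p) (9 - 2*p) 2
    + mono (5 - p) (11 - 2*p) 1
  + ∑ n ∈ (Finset.Icc (7 - p) (-2)).filter (fun n => Even n),
      (mono (n - 2) (2*n - 1) ((p + n - 5)/2 + 1) + mono (n - 1) (2*n - 1) ((p + n - 5)/2 + 2)
        + mono (n - 1) (2*n + 1) ((p + n - 5)/2) + mono n (2*n + 1) ((p + n - 5)/2 + 1))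
  + (mono (-2) (-1) ((p - 9)/2 + 3) + mono (-1) (-1) ((p - 9)/2 + 3)
      + mono (-1) 1 ((p - 9)/2 + 2) + mono 0 1 ((p - 9)/2 + 4))
  + (mono 0 3 ((p - 9)/2 + 4) + mono 1 3 ((p - 9)/2 + 3)
      + mono 1 5 ((p - 9)/2 + 3) + mono 2 5 ((p - 9)/2 + 4))
  + ∑ m ∈ (Finset.Icc 2 (p - 3)).filter (fun m => Even m),
      (mono m (2*m + 3) ((p - m - 3)/2 + 1) + mono (m + 1) (2*m + 3) ((p - m - 3)/2)
        + mono (m + 1) (2*m + 5) ((p - m - 3)/2 + 2) + mono (m + 2) (2*m + 5) ((p - m - 3)/2 + 1))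
  + mono p (2*p + 3) 1

/-- The Khovanov Poincaré polynomial `Torus_p(q,t)` of the torus knot `T(2,p)`. -/
noncomputable def Torus (p : ℤ) : LP :=
  mono 0 (p - 2) 1 + mono 0 p 1
    + ∑ k ∈ Finset.Icc 1 ((p - 1)/2),
        (mono (2*k) (p + 4*k - 2) 1 + mono (2*k + 1) (p + 4*k + 2) 1)

/-- The Khovanov Poincaré polynomial `Kh_{p,r}(q,t)` of `P(p, -(p-2), -r)` (formula (002)). -/
noncomputable def KhR (p r : ℤ) : LP :=
  mono r (2*r) 1 * Kh p + mono 0 1 1 + mono 0 3 1 + mono 1 3 1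
    + ∑ k ∈ Finset.Icc 1 (r/2 - 1),
        (mono (2*k) (4*k + 1) 1 + mono (2*k) (4*k + 3) 1
          + mono (2*k + 1) (4*k + 3) 1 + mono (2*k + 1) (4*k + 5) 1)
    + mono (r + 1) (2*r + 5) 1

/-- Evaluation at `q = 1, t = 1`: the sum of all coefficients. -/
noncomputable def evalOneOne (f : LP) : ℤ := f.coeff.sum fun _ c => c

/-- Evaluation at `q = 1, t = -1`. -/
noncomputable def evalOneNegOne (f : LP) : ℤ := f.coeff.sum fun ij c => c * (ij.1.negOnePow : ℤ)

/-- Substitution `t = -1`, yielding a Laurent polynomial in `q`. -/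
noncomputable def evalTNegOne (f : LP) : LaurentPolynomial ℤ :=
  f.coeff.sum fun ij c => LaurentPolynomial.C (c * (ij.1.negOnePow : ℤ)) * LaurentPolynomial.T ij.2

/-- Substitution `q ↦ q⁻¹, t = -1`, yielding a Laurent polynomial in `q`. -/
noncomputable def evalQInvTNegOne (f : LP) : LaurentPolynomial ℤ :=
  f.coeff.sum fun ij c => LaurentPolynomial.C (c * (ij.1.negOnePow : ℤ)) * LaurentPolynomial.T (-ij.2)

/-- Substitution `(q, t) ↦ (q⁻¹, t⁻¹)` on two-variable Laurent polynomials. -/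
noncomputable def inv2 (f : LP) : LP := AddMonoidAlgebra.ofCoeff (Finsupp.mapDomain (fun ij => -ij) f.coeff)


/-!
Apart from `q + q³`, the terms of `Kh_p` group into knight-move pairs `c tⁱ qʲ (1 + t q⁴)`, and
`Q_p` is the sum of their lower halves. Inside the two sums of `Kh_p` the pairing is not
block-by-block: the lower half of block `n`, multiplied by `t q⁴`, is the upper half of block
`n + 2`. So multiplying the sum of lower halves by `t q⁴` telescopes, and the two boundary terms
of each telescope are exactly the isolated monomials of `Kh_p`. The coefficients of `Q_p` are the
`I_n + 1, I_n + 2, I_m, I_m + 1, …`, all nonnegative.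
-/

theorem sum_filter_even_Icc_add_two_add {M : Type*} [AddCommMonoid M] (f : ℤ → M) {a b : ℤ}
    (ha : Even a) (hb : Even b) (hab : a ≤ b + 2) :
    ∑ n ∈ (Icc a b).filter (fun n => Even n), f (n + 2) + f a
      = ∑ n ∈ (Icc a b).filter (fun n => Even n), f n + f (b + 2) := by
  have shift : ∑ n ∈ (Icc a b).filter (fun n => Even n), f (n + 2)
      = ∑ n ∈ (Icc (a + 2) (b + 2)).filter (fun n => Even n), f n := by
    rw [← map_add_right_Icc, filter_map, sum_map]
    simp
  have bottom : (Icc a (b + 2)).filter (fun n => Even n)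
      = insert a ((Icc (a + 2) (b + 2)).filter (fun n => Even n)) := by
    ext n; simp only [mem_insert, mem_filter, mem_Icc, Int.even_iff] at *; omega
  have top : (Icc a (b + 2)).filter (fun n => Even n)
      = insert (b + 2) ((Icc a b).filter (fun n => Even n)) := by
    ext n; simp only [mem_insert, mem_filter, mem_Icc, Int.even_iff] at *; omega
  rw [shift, add_comm, ← sum_insert (by simp), ← bottom, top, sum_insert (by simp), add_comm]

theorem mono_congr {i j c i' j' c' : ℤ} (hi : i = i') (hj : j = j') (hc : c = c') :
    mono i j c = mono i' j' c' := by
  rw [hi, hj, hc]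

theorem mono_add (i j a b : ℤ) : mono i j (a + b) = mono i j a + mono i j b :=
  AddMonoidAlgebra.single_add _ _ _

theorem mono_zero (i j : ℤ) : mono i j 0 = 0 :=
  AddMonoidAlgebra.single_zero _

theorem mono_mul_mono (i j a k l b : ℤ) :
    mono i j a * mono k l b = mono (i + k) (j + l) (a * b) := by
  simp only [mono, AddMonoidAlgebra.single_mul_single, Prod.mk_add_mk]

def nonnegCoeffs : AddSubmonoid LP where
  carrier := {f | ∀ ij, 0 ≤ f.coeff ij}
  zero_mem' _ := le_rfl
  add_mem' hf hg ij := add_nonneg (hf ij) (hg ij)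

theorem mono_mem_nonnegCoeffs (i j : ℤ) {c : ℤ} (hc : 0 ≤ c) :
    mono i j c ∈ nonnegCoeffs := by
  intro ij
  simp only [mono, AddMonoidAlgebra.coeff_single, Finsupp.single_apply]
  split_ifs <;> omega

/- `mono 1 4 1 = t q⁴` is the knight move. `negLower p n` and `negUpper p n` are the lower and
upper halves of the two knight-move pairs hidden in the `n`-th summand of the first sum in `Kh p`;
likewise `posLower`, `posUpper` for the second sum. -/

noncomputable section KnightMoves

variable (p : ℤ)

def negLower (n : ℤ) : LP :=
  mono (n - 1) (2*n - 1) ((p + n - 5)/2 + 2) + mono n (2*n + 1) ((p + n - 5)/2 + 1)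

def negUpper (n : ℤ) : LP :=
  mono (n - 2) (2*n - 1) ((p + n - 5)/2 + 1) + mono (n - 1) (2*n + 1) ((p + n - 5)/2)

def posLower (m : ℤ) : LP :=
  mono (m + 1) (2*m + 3) ((p - m - 3)/2) + mono (m + 2) (2*m + 5) ((p - m - 3)/2 + 1)

def posUpper (m : ℤ) : LP :=
  mono m (2*m + 3) ((p - m - 3)/2 + 1) + mono (m + 1) (2*m + 5) ((p - m - 3)/2 + 2)

theorem knight_mul_negLower (n : ℤ) : mono 1 4 1 * negLower p n = negUpper p (n + 2) := by
  simp only [negLower, negUpper, mul_add, mono_mul_mono]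
  congr 1 <;> apply mono_congr <;> omega

theorem knight_mul_posLower (m : ℤ) : mono 1 4 1 * posLower p m = posUpper p (m + 2) := by
  simp only [posLower, posUpper, mul_add, mono_mul_mono]
  congr 1 <;> apply mono_congr <;> omega

def negLowerSum : LP :=
  negLower p (5 - p) + ∑ n ∈ (Icc (7 - p) (-2)).filter (fun n => Even n), negLower p n

def posLowerSum : LP :=
  posLower p 0 + ∑ m ∈ (Icc 2 (p - 3)).filter (fun m => Even m), posLower p m

def khQuotient : LP :=
  mono (2 - p) (5 - 2*p) 1 + negLowerSum p + mono (-1) (-1) ((p - 9)/2 + 3)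
    + mono 0 1 ((p - 9)/2 + 3) + posLowerSum p

variable {p}

theorem negLower_mem_nonnegCoeffs {n : ℤ} (h : 3 ≤ p + n) : negLower p n ∈ nonnegCoeffs :=
  add_mem (mono_mem_nonnegCoeffs _ _ (by omega)) (mono_mem_nonnegCoeffs _ _ (by omega))

theorem posLower_mem_nonnegCoeffs {m : ℤ} (h : m ≤ p - 3) : posLower p m ∈ nonnegCoeffs :=
  add_mem (mono_mem_nonnegCoeffs _ _ (by omega)) (mono_mem_nonnegCoeffs _ _ (by omega))

theorem negLowerSum_mem_nonnegCoeffs : negLowerSum p ∈ nonnegCoeffs :=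
  add_mem (negLower_mem_nonnegCoeffs (by omega)) <| sum_mem fun n hn ↦
    negLower_mem_nonnegCoeffs (by simp only [mem_filter, mem_Icc] at hn; omega)

theorem posLowerSum_mem_nonnegCoeffs (hp : 3 ≤ p) : posLowerSum p ∈ nonnegCoeffs :=
  add_mem (posLower_mem_nonnegCoeffs (by omega)) <| sum_mem fun m hm ↦
    posLower_mem_nonnegCoeffs (by simp only [mem_filter, mem_Icc] at hm; omega)

theorem khQuotient_mem_nonnegCoeffs (hp : 3 ≤ p) : khQuotient p ∈ nonnegCoeffs := by
  refine add_mem (add_mem (add_mem (add_mem ?_ negLowerSum_mem_nonnegCoeffs) ?_) ?_)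
    (posLowerSum_mem_nonnegCoeffs hp) <;>
  exact mono_mem_nonnegCoeffs _ _ (by omega)

theorem negUpper_add_negLower (n : ℤ) :
    negUpper p n + negLower p n
      = mono (n - 2) (2*n - 1) ((p + n - 5)/2 + 1) + mono (n - 1) (2*n - 1) ((p + n - 5)/2 + 2)
        + mono (n - 1) (2*n + 1) ((p + n - 5)/2) + mono n (2*n + 1) ((p + n - 5)/2 + 1) := by
  rw [negUpper, negLower]; abel

theorem posUpper_add_posLower (m : ℤ) :
    posUpper p m + posLower p m
      = mono m (2*m + 3) ((p - m - 3)/2 + 1) + mono (m + 1) (2*m + 3) ((p - m - 3)/2)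
        + mono (m + 1) (2*m + 5) ((p - m - 3)/2 + 2)
        + mono (m + 2) (2*m + 5) ((p - m - 3)/2 + 1) := by
  rw [posUpper, posLower]; abel

theorem negLower_five_sub :
    negLower p (5 - p) = mono (4 - p) (9 - 2*p) 2 + mono (5 - p) (11 - 2*p) 1 := by
  rw [negLower]; congr 1 <;> apply mono_congr <;> omega

theorem negUpper_zero :
    negUpper p 0 = mono (-2) (-1) ((p - 9)/2 + 3) + mono (-1) 1 ((p - 9)/2 + 2) := by
  rw [negUpper]; congr 1 <;> apply mono_congr <;> omega

theorem posLower_zero : posLower p 0 = mono 1 3 ((p - 9)/2 + 3) + mono 2 5 ((p - 9)/2 + 4) := by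
  rw [posLower]; congr 1 <;> apply mono_congr <;> omega

theorem posUpper_sub_one : posUpper p (p - 1) = mono p (2*p + 3) 1 := by
  rw [posUpper, show (p - (p - 1) - 3)/2 + 1 = 0 by omega, mono_zero, zero_add]
  apply mono_congr <;> omega

theorem knight_mul_negLowerSum (hp : Odd p) (hp7 : 7 ≤ p) :
    mono 1 4 1 * negLowerSum p
      = ∑ n ∈ (Icc (7 - p) (-2)).filter (fun n => Even n), negUpper p n + negUpper p 0 := by
  have hp' : Even (7 - p) := Int.even_iff.mpr (by have := Int.odd_iff.mp hp; omega)
  rw [negLowerSum, mul_add, mul_sum]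
  simp only [knight_mul_negLower]
  rw [show 5 - p + 2 = 7 - p by ring, add_comm]
  exact sum_filter_even_Icc_add_two_add _ hp' (by decide) (by omega)

theorem knight_mul_posLowerSum (hp : Odd p) (hp3 : 3 ≤ p) :
    mono 1 4 1 * posLowerSum p
      = ∑ m ∈ (Icc 2 (p - 3)).filter (fun m => Even m), posUpper p m + posUpper p (p - 1) := by
  have hp' : Even (p - 3) := Int.even_iff.mpr (by have := Int.odd_iff.mp hp; omega)
  rw [posLowerSum, mul_add, mul_sum]
  simp only [knight_mul_posLower]
  rw [show p - 1 = p - 3 + 2 by ring, add_comm]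
  exact sum_filter_even_Icc_add_two_add _ (by decide) hp' (by omega)

theorem Kh_eq_add_mul_khQuotient (hp : Odd p) (hp7 : 7 ≤ p) :
    Kh p = mono 0 1 1 + mono 0 3 1 + (1 + mono 1 4 1) * khQuotient p := by
  have h₁ : mono 1 4 1 * mono (2 - p) (5 - 2*p) 1 = mono (3 - p) (9 - 2*p) 1 := by
    rw [mono_mul_mono]; apply mono_congr <;> ring
  have h₂ : mono 1 4 1 * mono (-1) (-1) ((p - 9)/2 + 3) = mono 0 3 ((p - 9)/2 + 3) := by
    rw [mono_mul_mono]; apply mono_congr <;> ring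
  have h₃ : mono 1 4 1 * mono 0 1 ((p - 9)/2 + 3) = mono 1 5 ((p - 9)/2 + 3) := by
    rw [mono_mul_mono]; apply mono_congr <;> ring
  have h₄ : mono 0 1 ((p - 9)/2 + 4) = mono 0 1 1 + mono 0 1 ((p - 9)/2 + 3) := by
    rw [← mono_add]; apply mono_congr <;> ring
  have h₅ : mono 0 3 ((p - 9)/2 + 4) = mono 0 3 1 + mono 0 3 ((p - 9)/2 + 3) := by
    rw [← mono_add]; apply mono_congr <;> ring
  rw [one_add_mul, khQuotient]
  simp only [mul_add, knight_mul_negLowerSum hp hp7, knight_mul_posLowerSum hp (by omega),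
    h₁, h₂, h₃]
  unfold Kh negLowerSum posLowerSum
  simp only [← negUpper_add_negLower, ← posUpper_add_posLower, sum_add_distrib]
  rw [negLower_five_sub, negUpper_zero, posLower_zero, posUpper_sub_one, h₄, h₅]
  abel

end KnightMoves

/-- For odd `p ≥ 9` there is `Q_p ∈ ℤ[q^{±1}, t^{±1}]` with nonnegative coefficients such
that `Kh_p(q,t) = q·(1 + q²) + (1 + t q⁴) · Q_p(q,t)`. -/
theorem stmt_7 (p : ℤ) (hp : Odd p) (hp9 : 9 ≤ p) :
    ∃ Q : LP, (∀ ij : ℤ × ℤ, 0 ≤ Q.coeff ij) ∧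
      Kh p = mono 0 1 1 + mono 0 3 1 + (1 + mono 1 4 1) * Q :=
  ⟨khQuotient p, khQuotient_mem_nonnegCoeffs (by omega), Kh_eq_add_mul_khQuotient hp (by omega)⟩
end

section
/- For every odd integer p ≥ 9, write c(i,j) for the coefficient of q^j t^i in Kh_p. Then c(i, 2i+1) = c(i+1, 2i+5) for every integer i ∉ {-1, 0}; moreover c(0,1) - 1 = c(1,5) and c(-1,-1) = c(0,3) - 1. -/
open Finset

/-!
Each of the two block sums of `Kh_p` meets a given monomial `t^i q^j` in at most one summand, so
every coefficient `c(i, j)` is an explicit sum of 21 guarded terms, each linear in `p` and `i`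
(up to halving). Along the diagonals `j = 2i + 1` and `j = 2i + 3` the guards only change at
finitely many breakpoints in `i`; between consecutive breakpoints both sides of each identity
are linear expressions in `(p - 1) / 2` and `i / 2`, so each identity is linear integer arithmetic.
-/

theorem AddMonoidAlgebra.coeff_sum_single_of_forall_eq_iff {ι R G : Type*} [Semiring R]
    [DecidableEq ι] (s : Finset ι) (F : ι → G) (c : ι → R) {g : G} (v : ι) (P : Prop)
    [Decidable P] (hF : ∀ n, F n = g ↔ n = v ∧ P) :
    (∑ n ∈ s, single (F n) (c n)).coeff g = if v ∈ s ∧ P then c v else 0 := by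
  classical
  simp only [coeff_sum, Finsupp.finsetSum_apply, coeff_single, Finsupp.single_apply, hF]
  by_cases hP : P
  · simp only [hP, and_true, Finset.sum_ite_eq']
  · simp [hP]

theorem Int.mem_filter_even_Icc {a b v : ℤ} :
    v ∈ (Icc a b).filter Even ↔ v % 2 = 0 ∧ a ≤ v ∧ v ≤ b := by
  rw [mem_filter, mem_Icc, Int.even_iff, and_comm]

theorem AddMonoidAlgebra.coeff_sum_even_Icc_single {R G : Type*} [Semiring R] {a b : ℤ} (v : ℤ)
    (P : Prop) [Decidable P] (F : ℤ → G) (c : ℤ → R) {k : G} (hF : ∀ n, F n = k ↔ n = v ∧ P) :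
    (∑ n ∈ (Icc a b).filter Even, single (F n) (c n)).coeff k
      = if v % 2 = 0 ∧ a ≤ v ∧ v ≤ b ∧ P then c v else 0 := by
  rw [coeff_sum_single_of_forall_eq_iff _ F c v P hF]
  simp only [Int.mem_filter_even_Icc, and_assoc]

open AddMonoidAlgebra in
theorem Kh_coeff (p i j : ℤ) : (Kh p).coeff (i, j) =
    (if 2 - p = i ∧ 5 - 2*p = j then 1 else 0)
  + (if 3 - p = i ∧ 9 - 2*p = j then 1 else 0)
  + (if 4 - p = i ∧ 9 - 2*p = j then 2 else 0)
  + (if 5 - p = i ∧ 11 - 2*p = j then 1 else 0)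
  + (if (i+2) % 2 = 0 ∧ 7 - p ≤ i+2 ∧ i+2 ≤ -2 ∧ j = 2*i+3 then (p + (i+2) - 5)/2 + 1 else 0)
  + (if (i+1) % 2 = 0 ∧ 7 - p ≤ i+1 ∧ i+1 ≤ -2 ∧ j = 2*i+1 then (p + (i+1) - 5)/2 + 2 else 0)
  + (if (i+1) % 2 = 0 ∧ 7 - p ≤ i+1 ∧ i+1 ≤ -2 ∧ j = 2*i+3 then (p + (i+1) - 5)/2 else 0)
  + (if i % 2 = 0 ∧ 7 - p ≤ i ∧ i ≤ -2 ∧ j = 2*i+1 then (p + i - 5)/2 + 1 else 0)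
  + (if -2 = i ∧ -1 = j then (p - 9)/2 + 3 else 0)
  + (if -1 = i ∧ -1 = j then (p - 9)/2 + 3 else 0)
  + (if -1 = i ∧ 1 = j then (p - 9)/2 + 2 else 0)
  + (if 0 = i ∧ 1 = j then (p - 9)/2 + 4 else 0)
  + (if 0 = i ∧ 3 = j then (p - 9)/2 + 4 else 0)
  + (if 1 = i ∧ 3 = j then (p - 9)/2 + 3 else 0)
  + (if 1 = i ∧ 5 = j then (p - 9)/2 + 3 else 0)
  + (if 2 = i ∧ 5 = j then (p - 9)/2 + 4 else 0)
  + (if i % 2 = 0 ∧ 2 ≤ i ∧ i ≤ p - 3 ∧ j = 2*i+3 then (p - i - 3)/2 + 1 else 0)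
  + (if (i-1) % 2 = 0 ∧ 2 ≤ i-1 ∧ i-1 ≤ p - 3 ∧ j = 2*i+1 then (p - (i-1) - 3)/2 else 0)
  + (if (i-1) % 2 = 0 ∧ 2 ≤ i-1 ∧ i-1 ≤ p - 3 ∧ j = 2*i+3 then (p - (i-1) - 3)/2 + 2 else 0)
  + (if (i-2) % 2 = 0 ∧ 2 ≤ i-2 ∧ i-2 ≤ p - 3 ∧ j = 2*i+1 then (p - (i-2) - 3)/2 + 1 else 0)
  + (if p = i ∧ 2*p + 3 = j then 1 else 0) := by
  unfold Kh mono
  simp only [coeff_add, Finsupp.add_apply, sum_add_distrib]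
  rw [coeff_sum_even_Icc_single (i+2) (j = 2*i+3) (fun n => (n-2, 2*n-1)) (fun n => (p+n-5)/2+1)
        (by intro n; simp only [Prod.mk.injEq]; omega),
      coeff_sum_even_Icc_single (i+1) (j = 2*i+1) (fun n => (n-1, 2*n-1)) (fun n => (p+n-5)/2+2)
        (by intro n; simp only [Prod.mk.injEq]; omega),
      coeff_sum_even_Icc_single (i+1) (j = 2*i+3) (fun n => (n-1, 2*n+1)) (fun n => (p+n-5)/2)
        (by intro n; simp only [Prod.mk.injEq]; omega),
      coeff_sum_even_Icc_single i (j = 2*i+1) (fun n => (n, 2*n+1)) (fun n => (p+n-5)/2+1)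
        (by intro n; simp only [Prod.mk.injEq]; omega),
      coeff_sum_even_Icc_single i (j = 2*i+3) (fun m => (m, 2*m+3)) (fun m => (p-m-3)/2+1)
        (by intro n; simp only [Prod.mk.injEq]; omega),
      coeff_sum_even_Icc_single (i-1) (j = 2*i+1) (fun m => (m+1, 2*m+3)) (fun m => (p-m-3)/2)
        (by intro n; simp only [Prod.mk.injEq]; omega),
      coeff_sum_even_Icc_single (i-1) (j = 2*i+3) (fun m => (m+1, 2*m+5)) (fun m => (p-m-3)/2+2)
        (by intro n; simp only [Prod.mk.injEq]; omega),
      coeff_sum_even_Icc_single (i-2) (j = 2*i+1) (fun m => (m+2, 2*m+5)) (fun m => (p-m-3)/2+1)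
        (by intro n; simp only [Prod.mk.injEq]; omega)]
  simp only [coeff_single, Finsupp.single_apply, Prod.mk.injEq]
  ring

section
variable {p : ℤ} (hp9 : 9 ≤ p)
include hp9

theorem Kh_coeff_neg_one_neg_one : (Kh p).coeff (-1, -1) = (p - 9) / 2 + 3 := by
  rw [Kh_coeff]
  simp (disch := omega) only [if_neg, and_self, if_true, add_zero, zero_add]

theorem Kh_coeff_zero_one : (Kh p).coeff (0, 1) = (p - 9) / 2 + 4 := by
  rw [Kh_coeff]
  simp (disch := omega) only [if_neg, and_self, if_true, add_zero, zero_add]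

theorem Kh_coeff_zero_three : (Kh p).coeff (0, 3) = (p - 9) / 2 + 4 := by
  rw [Kh_coeff]
  simp (disch := omega) only [if_neg, and_self, if_true, add_zero, zero_add]

theorem Kh_coeff_one_five : (Kh p).coeff (1, 5) = (p - 9) / 2 + 3 := by
  rw [Kh_coeff]
  simp (disch := omega) only [if_neg, and_self, if_true, add_zero, zero_add]

variable (hp : Odd p) {i : ℤ}
include hp

-- The cases are the maximal intervals of `i` (of one parity) on which all guards are constant.
theorem Kh_coeff_lowerDiag_eq_upperDiag_succ_of_even (he : i % 2 = 0) (h0 : i ≠ 0) :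
    (Kh p).coeff (i, 2*i + 1) = (Kh p).coeff (i + 1, 2*i + 5) := by
  have hp2 : p % 2 = 1 := Int.odd_iff.mp hp
  rw [Kh_coeff, Kh_coeff]
  have : i ≤ 3-p ∨ i = 5-p ∨ (7-p ≤ i ∧ i ≤ -4) ∨ i = -2 ∨ i = 2 ∨ (4 ≤ i ∧ i ≤ p-3) ∨
      i = p-1 ∨ p+1 ≤ i := by omega
  rcases this with h | h | h | h | h | h | h | h <;>
    simp (disch := omega) only [if_pos, if_neg, and_true] <;> omega

theorem Kh_coeff_lowerDiag_eq_upperDiag_succ_of_odd (ho : i % 2 = 1) (h1 : i ≠ -1) :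
    (Kh p).coeff (i, 2*i + 1) = (Kh p).coeff (i + 1, 2*i + 5) := by
  have hp2 : p % 2 = 1 := Int.odd_iff.mp hp
  rw [Kh_coeff, Kh_coeff]
  have : i ≤ -p ∨ i = 2-p ∨ i = 4-p ∨ (6-p ≤ i ∧ i ≤ -5) ∨ i = -3 ∨ i = 1 ∨
      (3 ≤ i ∧ i ≤ p-4) ∨ i = p-2 ∨ p ≤ i := by omega
  rcases this with h | h | h | h | h | h | h | h | h <;>
    simp (disch := omega) only [if_pos, if_neg, and_true] <;> omega

end

/-- For odd `p ≥ 9`, writing `c(i,j)` for the coefficient of `q^j t^i` in `Kh_p`: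
`c(i, 2i+1) = c(i+1, 2i+5)` for `i ∉ {-1, 0}`, `c(0,1) - 1 = c(1,5)`, and
`c(-1,-1) = c(0,3) - 1`. -/
theorem stmt_8 (p : ℤ) (hp : Odd p) (hp9 : 9 ≤ p) :
    (∀ i : ℤ, i ≠ -1 → i ≠ 0 → (Kh p).coeff (i, 2*i + 1) = (Kh p).coeff (i + 1, 2*i + 5)) ∧
    (Kh p).coeff (0, 1) - 1 = (Kh p).coeff (1, 5) ∧
    (Kh p).coeff (-1, -1) = (Kh p).coeff (0, 3) - 1 := by
  refine ⟨fun i h1 h0 => ?_, ?_, ?_⟩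
  · rcases Int.emod_two_eq_zero_or_one i with he | ho
    · exact Kh_coeff_lowerDiag_eq_upperDiag_succ_of_even hp9 hp he h0
    · exact Kh_coeff_lowerDiag_eq_upperDiag_succ_of_odd hp9 hp ho h1
  · rw [Kh_coeff_zero_one hp9, Kh_coeff_one_five hp9]
    ring
  · rw [Kh_coeff_neg_one_neg_one hp9, Kh_coeff_zero_three hp9]
    ring
end

section
/- For every odd integer p ≥ 9 and every even integer r ≥ 2, every monomial q^j t^i appearing with nonzero coefficient in Kh_{p,r}(q,t) satisfies j - 2i ∈ {1, 3}. -/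
open Finset

/-!
A monomial `q^j t^i` lies on the diagonal `δ = j - 2i`, and polynomials supported on a set of
diagonals form a submodule. Every monomial written out in formula (000) and in the correction
terms of `Kh_{p,r}` has `δ ∈ {1, 3}`, and the shift `q^{2r} t^r` has `δ = 0`.
-/

open AddMonoidAlgebra

lemma AddMonoidAlgebra.single_mul_mem_supported {k G : Type*} [Semiring k] [Add G]
    {s : Set G} {a : G} (ha : ∀ g ∈ s, a + g ∈ s) (c : k) {f : AddMonoidAlgebra k G}
    (hf : f ∈ supported k k s) : single a c * f ∈ supported k k s := by
  classical
  intro x hx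
  obtain ⟨g, hg, rfl⟩ := Finset.mem_image.mp (support_coeff_single_mul_subset f c a hx)
  exact ha g (hf hg)

noncomputable def deltaSupported (S : Set ℤ) : Submodule ℤ LP :=
  supported ℤ ℤ {ij | ij.2 - 2 * ij.1 ∈ S}

lemma mono_mem_deltaSupported {S : Set ℤ} {i j : ℤ} (h : j - 2 * i ∈ S) (c : ℤ) :
    mono i j c ∈ deltaSupported S := by
  intro x hx
  obtain rfl := Finset.mem_singleton.mp (Finsupp.support_single_subset hx)
  exact h

lemma mono_mul_mem_deltaSupported {S : Set ℤ} (r c : ℤ) {f : LP} (hf : f ∈ deltaSupported S) :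
    mono r (2 * r) c * f ∈ deltaSupported S := by
  refine single_mul_mem_supported (a := (r, 2 * r)) (fun g hg => ?_) c hf
  have hg : g.2 - 2 * g.1 ∈ S := hg
  change 2 * r + g.2 - 2 * (r + g.1) ∈ S
  convert hg using 1
  ring

lemma kh_mem_deltaSupported (p : ℤ) : Kh p ∈ deltaSupported {1, 3} := by
  unfold Kh
  repeat' apply Submodule.add_mem
  all_goals try (apply Submodule.sum_mem; intro n _; repeat' apply Submodule.add_mem)
  all_goals
    exact mono_mem_deltaSupported
      (by simp only [Set.mem_insert_iff, Set.mem_singleton_iff]; omega) _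

lemma khR_mem_deltaSupported (p r : ℤ) : KhR p r ∈ deltaSupported {1, 3} := by
  unfold KhR
  repeat' apply Submodule.add_mem
  · exact mono_mul_mem_deltaSupported r 1 (kh_mem_deltaSupported p)
  all_goals try (apply Submodule.sum_mem; intro k _; repeat' apply Submodule.add_mem)
  all_goals
    exact mono_mem_deltaSupported
      (by simp only [Set.mem_insert_iff, Set.mem_singleton_iff]; omega) _

theorem stmt_10_general (p r : ℤ) :
    ∀ i j : ℤ, (KhR p r).coeff (i, j) ≠ 0 → j - 2*i = 1 ∨ j - 2*i = 3 := by
  intro i j hij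
  exact khR_mem_deltaSupported p r (Finsupp.mem_support_iff.mpr hij)

/-- For odd `p ≥ 9` and even `r ≥ 2`, every monomial `q^j t^i` of `Kh_{p,r}` satisfies
`j - 2i ∈ {1, 3}`. -/
theorem stmt_10 (p r : ℤ) (hp : Odd p) (hp9 : 9 ≤ p) (hr : Even r) (hr2 : 2 ≤ r) :
    ∀ i j : ℤ, (KhR p r).coeff (i, j) ≠ 0 → j - 2*i = 1 ∨ j - 2*i = 3 :=
  stmt_10_general p r
end

section
/- For every odd integer p ≥ 9 and every even integer r ≥ 2, Kh_{p,r}(1,1) = p(p-2) + 2r + 1. -/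
open Finset

/-! Evaluation at `q = t = 1` is a ring homomorphism, so `Kh_{p,r}(1,1) = Kh_p(1,1) + 2r`.
Writing `p = 2s + 1`, the two families of blocks in `Kh_p` contribute arithmetic progressions
with sums `2s² - 6s` and `2s² - 2s`, and the remaining terms add up to `8s`; in total
`4s² = p(p-2) + 1`. -/

noncomputable def evalOneOneHom : LP →ₐ[ℤ] ℤ := AddMonoidAlgebra.lift ℤ ℤ (ℤ × ℤ) 1

theorem evalOneOneHom_apply (f : LP) : evalOneOneHom f = evalOneOne f := by
  simp [evalOneOneHom, AddMonoidAlgebra.lift_apply, evalOneOne]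

theorem evalOneOneHom_mono (i j c : ℤ) : evalOneOneHom (mono i j c) = c := by
  simp [evalOneOneHom, mono]

theorem Int.two_mul_sum_Icc_affine (c d : ℤ) {A B : ℤ} (hAB : A - 1 ≤ B) :
    2 * ∑ j ∈ Icc A B, (c + d * j) = (B - A + 1) * (2 * c + d * (A + B)) := by
  induction B, hAB using Int.leInduction with
  | base => simp
  | succ B hB ih =>
    rw [← insert_Icc_right_eq_Icc_add_one (by omega), sum_insert (by simp), mul_add, ih]
    ring

theorem Int.sum_Icc_eq_of_affine {f : ℤ → ℤ} {A B S : ℤ} (c d : ℤ) (hAB : A - 1 ≤ B)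
    (hf : ∀ j ∈ Icc A B, f j = c + d * j) (hS : 2 * S = (B - A + 1) * (2 * c + d * (A + B))) :
    ∑ j ∈ Icc A B, f j = S := by
  rw [sum_congr rfl hf]
  linarith [Int.two_mul_sum_Icc_affine c d hAB]

theorem Int.sum_filter_even_Icc {M : Type*} [AddCommMonoid M] {a : ℤ} (ha : Even a) (b : ℤ)
    (f : ℤ → M) :
    ∑ n ∈ (Icc a b).filter Even, f n = ∑ j ∈ Icc (a / 2) (b / 2), f (2 * j) := by
  have hfilter : (Icc a b).filter Even = (Icc (a / 2) (b / 2)).image (2 * ·) := by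
    have := Int.even_iff.mp ha
    ext n
    simp only [mem_filter, mem_image, mem_Icc, Int.even_iff]
    constructor
    · rintro ⟨⟨h₁, h₂⟩, h₃⟩
      exact ⟨n / 2, ⟨by omega, by omega⟩, by omega⟩
    · rintro ⟨j, ⟨h₁, h₂⟩, rfl⟩
      omega
  rw [hfilter, sum_image fun i _ j _ h => by omega]

theorem evalOneOne_Kh {p : ℤ} (hp : Odd p) (hp7 : 7 ≤ p) :
    evalOneOne (Kh p) = p * (p - 2) + 1 := by
  obtain ⟨s, rfl⟩ := hp
  have hlo : (7 - (2 * s + 1)) / 2 = 3 - s := by omega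
  have hhi : (2 * s + 1 - 3) / 2 = s - 1 := by omega
  have hmid : (2 * s + 1 - 9) / 2 = s - 4 := by omega
  rw [← evalOneOneHom_apply, Kh]
  simp only [map_add, map_sum, evalOneOneHom_mono]
  rw [Int.sum_filter_even_Icc ⟨3 - s, by ring⟩, Int.sum_filter_even_Icc even_two]
  simp only [hlo, hhi, hmid, Int.reduceDiv]
  rw [Int.sum_Icc_eq_of_affine (4 * s - 4) 4 (S := 2 * s ^ 2 - 6 * s) (by omega)
      (fun j _ => by omega) (by ring),
    Int.sum_Icc_eq_of_affine (4 * s) (-4) (S := 2 * s ^ 2 - 2 * s) (by omega)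
      (fun j _ => by omega) (by ring)]
  ring

/-- For odd `p ≥ 9` and even `r ≥ 2`, `Kh_{p,r}(1,1) = p(p-2) + 2r + 1`. -/
theorem stmt_11 (p r : ℤ) (hp : Odd p) (hp9 : 9 ≤ p) (hr : Even r) (hr2 : 2 ≤ r) :
    evalOneOne (KhR p r) = p * (p - 2) + 2*r + 1 := by
  obtain ⟨k, rfl⟩ := hr
  have hk : (k + k) / 2 - 1 = k - 1 := by omega
  rw [← evalOneOneHom_apply, KhR]
  simp only [map_add, map_mul, map_sum, evalOneOneHom_mono, hk]
  rw [evalOneOneHom_apply, evalOneOne_Kh hp (by omega),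
    Int.sum_Icc_eq_of_affine 4 0 (S := 4 * k - 4) (by omega) (fun j _ => by ring) (by ring)]
  ring
end

section
/- For every odd integer p ≥ 9, the coefficient of t^p in Kh_p(q,t) equals q^{2p+3}, the coefficient of t^{2-p} equals q^{5-2p}, and for every integer i with 3-p ≤ i ≤ p-1 the coefficient of t^i in Kh_p(q,t) is a nonzero polynomial in q (so the homological width of the rational Khovanov homology of P(p,-(p-2),0) is exactly 2p - 1, spanning homological degrees 2-p through p). -/
open Finset

/-!
Apart from the extreme monomials `q^{5-2p} t^{2-p}` and `q^{2p+3} t^p`, every monomial of `Kh_p`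
has `t`-degree in `[3-p, p-1]`; this gives the first two claims. All coefficients are
nonnegative, so no cancellation occurs, and for the third claim it suffices to find a monomial
with positive coefficient in each `t`-degree `i ∈ [3-p, p-1]`. The `n`-th summand of the first
sum has such monomials in every `t`-degree of `[n-2, n]`, the `m`-th summand of the second sum in
every `t`-degree of `[m, m+2]`. As `p` is odd, the endpoints `7-p` and `p-3` of the even index
ranges are even, so these windows cover `[5-p, -2]` and `[2, p-1]`; the degrees `3-p, 4-p` and
`-1, 0, 1` are covered by the remaining monomials.
-/

lemma coeff_mono (i j c a b : ℤ) :
    (mono i j c).coeff (a, b) = if i = a ∧ j = b then c else 0 := by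
  simp [mono, Finsupp.single_apply, Prod.ext_iff]

lemma coeff_add_apply (f g : LP) (x : ℤ × ℤ) : (f + g).coeff x = f.coeff x + g.coeff x := rfl

lemma coeff_sum_apply {ι : Type*} (s : Finset ι) (f : ι → LP) (x : ℤ × ℤ) :
    (∑ a ∈ s, f a).coeff x = ∑ a ∈ s, (f a).coeff x := by
  simp [Finsupp.finsetSum_apply]

def TDegIn (lo hi : ℤ) (f : LP) : Prop := ∀ i j, f.coeff (i, j) ≠ 0 → lo ≤ i ∧ i ≤ hi

def CoeffNonneg (f : LP) : Prop := ∀ x, 0 ≤ f.coeff x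

def HasPosTDeg (f : LP) (i : ℤ) : Prop := ∃ j, 0 < f.coeff (i, j)

section Closure

variable {f g : LP} {lo hi i j c : ℤ} {ι : Type*} {s : Finset ι} {F : ι → LP}

lemma tDegIn_mono (h : lo ≤ i ∧ i ≤ hi) : TDegIn lo hi (mono i j c) := by
  intro a b hab
  rw [coeff_mono] at hab
  split_ifs at hab <;> omega

lemma TDegIn.add (hf : TDegIn lo hi f) (hg : TDegIn lo hi g) : TDegIn lo hi (f + g) := by
  intro a b hab
  rw [coeff_add_apply] at hab
  by_cases hfa : f.coeff (a, b) = 0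
  · exact hg a b (by simpa [hfa] using hab)
  · exact hf a b hfa

lemma TDegIn.sum (h : ∀ a ∈ s, TDegIn lo hi (F a)) : TDegIn lo hi (∑ a ∈ s, F a) := by
  intro a b hab
  rw [coeff_sum_apply] at hab
  obtain ⟨k, hk, hk'⟩ := Finset.exists_ne_zero_of_sum_ne_zero hab
  exact h k hk a b hk'

lemma TDegIn.coeff_eq_zero (hf : TDegIn lo hi f) (h : i < lo ∨ hi < i) :
    f.coeff (i, j) = 0 := by
  by_contra hne
  have := hf i j hne
  omega

lemma coeffNonneg_mono (hc : 0 ≤ c) : CoeffNonneg (mono i j c) := by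
  rintro ⟨a, b⟩
  rw [coeff_mono]
  split_ifs <;> omega

lemma CoeffNonneg.add (hf : CoeffNonneg f) (hg : CoeffNonneg g) : CoeffNonneg (f + g) :=
  fun x => add_nonneg (hf x) (hg x)

lemma CoeffNonneg.sum (h : ∀ a ∈ s, CoeffNonneg (F a)) : CoeffNonneg (∑ a ∈ s, F a) := by
  intro x
  rw [coeff_sum_apply]
  exact Finset.sum_nonneg fun a ha => h a ha x

lemma HasPosTDeg.add_right (hf : HasPosTDeg f i) (hg : CoeffNonneg g) :
    HasPosTDeg (f + g) i := by
  obtain ⟨j, hj⟩ := hf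
  exact ⟨j, by rw [coeff_add_apply]; linarith [hg (i, j)]⟩

lemma HasPosTDeg.add_left (hg : HasPosTDeg g i) (hf : CoeffNonneg f) :
    HasPosTDeg (f + g) i := by
  rw [add_comm]
  exact hg.add_right hf

lemma HasPosTDeg.sum {a : ι} (ha : a ∈ s) (hpos : HasPosTDeg (F a) i)
    (h : ∀ b ∈ s, CoeffNonneg (F b)) : HasPosTDeg (∑ b ∈ s, F b) i := by
  obtain ⟨j, hj⟩ := hpos
  refine ⟨j, ?_⟩
  rw [coeff_sum_apply]
  exact hj.trans_le (Finset.single_le_sum (fun b hb => h b hb (i, j)) ha)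

end Closure

lemma exists_even_window {lo hi i : ℤ} (hlo : Even lo) (hhi : Even hi) (hle : lo ≤ hi)
    (h₁ : lo ≤ i) (h₂ : i ≤ hi + 2) :
    ∃ m, Even m ∧ lo ≤ m ∧ m ≤ hi ∧ m ≤ i ∧ i ≤ m + 2 := by
  obtain ⟨a, rfl⟩ := hlo
  obtain ⟨b, rfl⟩ := hhi
  by_cases h : i ≤ b + b
  · exact ⟨2 * (i / 2), even_two_mul _, by omega, by omega, by omega, by omega⟩
  · exact ⟨b + b, ⟨b, rfl⟩, by omega, le_rfl, by omega, by omega⟩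

namespace Kh

noncomputable def negBlock (p n : ℤ) : LP :=
  mono (n - 2) (2*n - 1) ((p + n - 5)/2 + 1) + mono (n - 1) (2*n - 1) ((p + n - 5)/2 + 2)
    + mono (n - 1) (2*n + 1) ((p + n - 5)/2) + mono n (2*n + 1) ((p + n - 5)/2 + 1)

noncomputable def posBlock (p m : ℤ) : LP :=
  mono m (2*m + 3) ((p - m - 3)/2 + 1) + mono (m + 1) (2*m + 3) ((p - m - 3)/2)
    + mono (m + 1) (2*m + 5) ((p - m - 3)/2 + 2) + mono (m + 2) (2*m + 5) ((p - m - 3)/2 + 1)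

noncomputable def low (p : ℤ) : LP :=
  mono (3 - p) (9 - 2*p) 1 + mono (4 - p) (9 - 2*p) 2 + mono (5 - p) (11 - 2*p) 1

noncomputable def centre (p : ℤ) : LP :=
  (mono (-2) (-1) ((p - 9)/2 + 3) + mono (-1) (-1) ((p - 9)/2 + 3)
      + mono (-1) 1 ((p - 9)/2 + 2) + mono 0 1 ((p - 9)/2 + 4))
  + (mono 0 3 ((p - 9)/2 + 4) + mono 1 3 ((p - 9)/2 + 3)
      + mono 1 5 ((p - 9)/2 + 3) + mono 2 5 ((p - 9)/2 + 4))

noncomputable def negPart (p : ℤ) : LP :=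
  ∑ n ∈ (Icc (7 - p) (-2)).filter (fun n => Even n), negBlock p n

noncomputable def posPart (p : ℤ) : LP :=
  ∑ m ∈ (Icc 2 (p - 3)).filter (fun m => Even m), posBlock p m

noncomputable def inner (p : ℤ) : LP := low p + negPart p + centre p + posPart p

theorem eq_add_inner (p : ℤ) :
    Kh p = mono (2 - p) (5 - 2*p) 1 + inner p + mono p (2*p + 3) 1 := by
  unfold Kh inner low negPart posPart centre negBlock posBlock
  abel

theorem coeff_apply (p i j : ℤ) : (Kh p).coeff (i, j) =
    (if 2 - p = i ∧ 5 - 2*p = j then 1 else 0) + (inner p).coeff (i, j)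
      + (if p = i ∧ 2*p + 3 = j then 1 else 0) := by
  rw [eq_add_inner, coeff_add_apply, coeff_add_apply, coeff_mono, coeff_mono]

variable {p n m i lo hi : ℤ}

lemma tDegIn_negBlock (hlo : lo ≤ n - 2) (hhi : n ≤ hi) : TDegIn lo hi (negBlock p n) := by
  unfold negBlock
  repeat' apply TDegIn.add
  all_goals exact tDegIn_mono (by omega)

lemma coeffNonneg_negBlock (hn : 7 - p ≤ n) : CoeffNonneg (negBlock p n) := by
  unfold negBlock
  repeat' apply CoeffNonneg.add
  all_goals exact coeffNonneg_mono (by omega)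

lemma hasPosTDeg_negBlock (hn : 7 - p ≤ n) (h : n - 2 ≤ i ∧ i ≤ n) :
    HasPosTDeg (negBlock p n) i := by
  refine ⟨if i = n then 2*n + 1 else 2*n - 1, ?_⟩
  simp only [negBlock, coeff_add_apply, coeff_mono]
  split_ifs <;> omega

lemma tDegIn_posBlock (hlo : lo ≤ m) (hhi : m + 2 ≤ hi) : TDegIn lo hi (posBlock p m) := by
  unfold posBlock
  repeat' apply TDegIn.add
  all_goals exact tDegIn_mono (by omega)

lemma coeffNonneg_posBlock (hm : m ≤ p - 3) : CoeffNonneg (posBlock p m) := by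
  unfold posBlock
  repeat' apply CoeffNonneg.add
  all_goals exact coeffNonneg_mono (by omega)

lemma hasPosTDeg_posBlock (hm : m ≤ p - 3) (h : m ≤ i ∧ i ≤ m + 2) :
    HasPosTDeg (posBlock p m) i := by
  refine ⟨if i = m then 2*m + 3 else 2*m + 5, ?_⟩
  simp only [posBlock, coeff_add_apply, coeff_mono]
  split_ifs <;> omega

lemma tDegIn_inner (hp : 5 ≤ p) : TDegIn (3 - p) (p - 1) (inner p) := by
  have hneg : TDegIn (3 - p) (p - 1) (negPart p) := .sum fun n hn => by
    simp only [mem_filter, mem_Icc] at hn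
    exact tDegIn_negBlock (by omega) (by omega)
  have hpos : TDegIn (3 - p) (p - 1) (posPart p) := .sum fun m hm => by
    simp only [mem_filter, mem_Icc] at hm
    exact tDegIn_posBlock (by omega) (by omega)
  unfold inner low centre
  refine .add (.add (.add ?_ hneg) ?_) hpos
  all_goals
    repeat' apply TDegIn.add
    all_goals exact tDegIn_mono (by omega)

lemma coeffNonneg_low : CoeffNonneg (low p) := by
  unfold low
  repeat' apply CoeffNonneg.add
  all_goals exact coeffNonneg_mono (by omega)

lemma coeffNonneg_centre (hp : 5 ≤ p) : CoeffNonneg (centre p) := by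
  unfold centre
  repeat' apply CoeffNonneg.add
  all_goals exact coeffNonneg_mono (by omega)

lemma coeffNonneg_negPart : CoeffNonneg (negPart p) :=
  .sum fun _ hn => coeffNonneg_negBlock (mem_Icc.1 (mem_filter.1 hn).1).1

lemma coeffNonneg_posPart : CoeffNonneg (posPart p) :=
  .sum fun _ hm => coeffNonneg_posBlock (mem_Icc.1 (mem_filter.1 hm).1).2

lemma hasPosTDeg_low (h : 3 - p ≤ i ∧ i ≤ 4 - p) : HasPosTDeg (low p) i := by
  refine ⟨9 - 2*p, ?_⟩
  simp only [low, coeff_add_apply, coeff_mono, and_true]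
  split_ifs <;> omega

lemma hasPosTDeg_centre (hp : 5 ≤ p) (h : -1 ≤ i ∧ i ≤ 1) : HasPosTDeg (centre p) i := by
  refine ⟨2*i + 1, ?_⟩
  obtain rfl | rfl | rfl : i = -1 ∨ i = 0 ∨ i = 1 := by omega
  all_goals norm_num [centre, coeff_add_apply, coeff_mono]; omega

lemma hasPosTDeg_negPart (hp : Odd p) (hp9 : 9 ≤ p) (h : 5 - p ≤ i ∧ i ≤ -2) :
    HasPosTDeg (negPart p) i := by
  obtain ⟨n, hn, hlo, hhi, h₁, h₂⟩ :=
    exists_even_window (lo := 7 - p) (hi := -2) (i := i + 2)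
      ((show Odd (7 : ℤ) by decide).sub_odd hp) (by decide) (by omega) (by omega) (by omega)
  exact .sum (mem_filter.2 ⟨mem_Icc.2 ⟨hlo, hhi⟩, hn⟩) (hasPosTDeg_negBlock hlo (by omega))
    fun _ hn => coeffNonneg_negBlock (mem_Icc.1 (mem_filter.1 hn).1).1

lemma hasPosTDeg_posPart (hp : Odd p) (hp5 : 5 ≤ p) (h : 2 ≤ i ∧ i ≤ p - 1) :
    HasPosTDeg (posPart p) i := by
  obtain ⟨m, hm, hlo, hhi, h₁, h₂⟩ := exists_even_window (lo := 2) (hi := p - 3) (i := i)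
    (by decide) (hp.sub_odd (by decide)) (by omega) h.1 (by omega)
  exact .sum (mem_filter.2 ⟨mem_Icc.2 ⟨hlo, hhi⟩, hm⟩)
    (hasPosTDeg_posBlock hhi ⟨h₁, h₂⟩)
    fun _ hm => coeffNonneg_posBlock (mem_Icc.1 (mem_filter.1 hm).1).2

lemma hasPosTDeg_inner (hp : Odd p) (hp9 : 9 ≤ p) (h : 3 - p ≤ i ∧ i ≤ p - 1) :
    HasPosTDeg (inner p) i := by
  have hcentre := coeffNonneg_centre (p := p) (by omega)
  unfold inner
  obtain hr | hr | hr | hr :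
      i ≤ 4 - p ∨ (5 - p ≤ i ∧ i ≤ -2) ∨ (-1 ≤ i ∧ i ≤ 1) ∨ 2 ≤ i := by
    omega
  · exact (((hasPosTDeg_low ⟨h.1, hr⟩).add_right coeffNonneg_negPart).add_right
      hcentre).add_right coeffNonneg_posPart
  · exact (((hasPosTDeg_negPart hp hp9 hr).add_left coeffNonneg_low).add_right
      hcentre).add_right coeffNonneg_posPart
  · exact ((hasPosTDeg_centre (by omega) hr).add_left
      (coeffNonneg_low.add coeffNonneg_negPart)).add_right coeffNonneg_posPart
  · exact (hasPosTDeg_posPart hp (by omega) ⟨hr, h.2⟩).add_left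
      ((coeffNonneg_low.add coeffNonneg_negPart).add hcentre)

end Kh

/-- For odd `p ≥ 9`, the coefficient of `t^p` in `Kh_p` is exactly `q^{2p+3}`, the
coefficient of `t^{2-p}` is exactly `q^{5-2p}`, and for each `i` with `3-p ≤ i ≤ p-1`
the coefficient of `t^i` is a nonzero polynomial in `q`: the homological width is
exactly `2p - 1`. -/
theorem stmt_17 (p : ℤ) (hp : Odd p) (hp9 : 9 ≤ p) :
    (∀ j : ℤ, (Kh p).coeff (p, j) = if j = 2*p + 3 then 1 else 0) ∧
    (∀ j : ℤ, (Kh p).coeff (2 - p, j) = if j = 5 - 2*p then 1 else 0) ∧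
    (∀ i : ℤ, 3 - p ≤ i → i ≤ p - 1 → ∃ j : ℤ, (Kh p).coeff (i, j) ≠ 0) := by
  have hinner := Kh.tDegIn_inner (p := p) (by omega)
  refine ⟨fun j => ?_, fun j => ?_, fun i hlo hhi => ?_⟩
  · rw [Kh.coeff_apply, hinner.coeff_eq_zero (by omega)]
    split_ifs <;> omega
  · rw [Kh.coeff_apply, hinner.coeff_eq_zero (by omega)]
    split_ifs <;> omega
  · obtain ⟨j, hj⟩ := Kh.hasPosTDeg_inner hp hp9 ⟨hlo, hhi⟩
    refine ⟨j, ?_⟩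
    rw [Kh.coeff_apply]
    split_ifs <;> omega
end
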